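/- arXiv:2210.11192 — 3 statements merged into one kernel-verified Lean document; each statement's English description precedes it below -/
import Mathlib

section
/- For any map A' → A of presheaves Δ_inert^op → Set, the induced map of simplicial sets j_!(A') → j_!(A) is CULF, i.e., for every active map g : [k'] → [k] in Δ the naturality square comparing j_!(A')_k → j_!(A')_{k'} and j_!(A)_k → j_!(A)_{k'} is a pullback of sets. -/
/-! Preliminaries: the active-inert factorization system on the simplex
category, the inert subcategory `Δ_inert`, the one-object category `Bℕ`,
twisted arrow categories, and the explicit free decomposition space formula,
following Hackney–Kock, "Free decomposition spaces". -/

open CategoryTheory SimplexCategory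

namespace FreeDecompPaper

/-- A map in the simplex category is *active* if it preserves endpoints:
`f 0 = 0` and `f (last) = last`. -/
def IsActive {x y : SimplexCategory} (f : x ⟶ y) : Prop :=
  f.toOrderHom 0 = 0 ∧ f.toOrderHom (Fin.last x.len) = Fin.last y.len

/-- A map in the simplex category is *inert* (distance-preserving) if
`f (i+1) = f i + 1` for all `i`. -/
def IsInert {x y : SimplexCategory} (f : x ⟶ y) : Prop :=
  ∀ i : Fin x.len, (f.toOrderHom i.succ : ℕ) = (f.toOrderHom i.castSucc : ℕ) + 1

lemma isInert_id (x : SimplexCategory) : IsInert (𝟙 x) := by intro i; simp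

lemma isInert_from_zero {n : ℕ} (f : mk 0 ⟶ mk n) : IsInert f := fun i => i.elim0

lemma isInert_comp {x y z : SimplexCategory} {f : x ⟶ y} {g : y ⟶ z}
    (hf : IsInert f) (hg : IsInert g) : IsInert (f ≫ g) := by
  intro i
  have key : ∀ a b : Fin (y.len + 1), (b : ℕ) = (a : ℕ) + 1 →
      (g.toOrderHom b : ℕ) = (g.toOrderHom a : ℕ) + 1 := by
    intro a b hab
    have ha : (a : ℕ) < y.len := by have := b.isLt; omega
    have e1 : (⟨(a : ℕ), ha⟩ : Fin y.len).castSucc = a := by ext; simp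
    have e2 : (⟨(a : ℕ), ha⟩ : Fin y.len).succ = b := by ext; simp; omega
    have := hg ⟨(a : ℕ), ha⟩
    rw [e1, e2] at this
    exact this
  simpa using key _ _ (hf i)

lemma isActive_id (x : SimplexCategory) : IsActive (𝟙 x) := by
  constructor <;> simp

lemma isActive_comp {x y z : SimplexCategory} {f : x ⟶ y} {g : y ⟶ z}
    (hf : IsActive f) (hg : IsActive g) : IsActive (f ≫ g) := by
  constructor
  · show g.toOrderHom (f.toOrderHom 0) = 0
    rw [hf.1, hg.1]
  · show g.toOrderHom (f.toOrderHom (Fin.last x.len)) = Fin.last z.len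
    rw [hf.2, hg.2]

/-- The inert map `ρᵢ : [1] → [k]` with image `{i, i+1}` (0-indexed vertices;
in the 1-indexed labelling of the paper its image is `{i-1, i}`). -/
def rho (k : ℕ) (i : Fin k) : mk 1 ⟶ mk k :=
  mkHom ⟨fun j => ⟨(i : ℕ) + (j : ℕ), by have := i.isLt; have := j.isLt; omega⟩,
    fun a b h => by
      simp only [Fin.mk_le_mk]
      have : (a : ℕ) ≤ (b : ℕ) := h
      omega⟩

/-- The vertex map `[0] → [k]` picking out the vertex `j`. -/
def vtx (k : ℕ) (j : Fin (k + 1)) : mk 0 ⟶ mk k :=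
  mkHom ⟨fun _ => j, fun _ _ _ => le_refl _⟩

/-- The unique active map `[1] → [k]`. -/
def mu (k : ℕ) : mk 1 ⟶ mk k :=
  mkHom ⟨fun j => ⟨(j : ℕ) * k, by
      have hj : (j : ℕ) ≤ 1 := by have := j.isLt; omega
      have : (j : ℕ) * k ≤ 1 * k := Nat.mul_le_mul_right k hj
      omega⟩,
    fun a b h => by
      simp only [Fin.mk_le_mk]
      exact Nat.mul_le_mul_right k h⟩

lemma isActive_mu (k : ℕ) : IsActive (mu k) := by
  constructor
  · ext
    show ((0 : Fin 2) : ℕ) * k = ((0 : Fin (k+1)) : ℕ)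
    simp
  · ext
    show ((Fin.last 1 : Fin 2) : ℕ) * k = ((Fin.last k : Fin (k+1)) : ℕ)
    simp [Fin.last]

/-- Iterated bottom coface `(d⊥)^a : [m] → [m+a]`, where `d⊥ = δ 0 : i ↦ i+1`. -/
def dBotPow (m : ℕ) : (a : ℕ) → (mk m ⟶ mk (m + a))
  | 0 => 𝟙 _
  | a + 1 => dBotPow m a ≫ δ (0 : Fin (m + a + 2))

/-- Iterated top coface `(d⊤)^b : [m] → [m+b]`, where `d⊤ = δ (last) : i ↦ i`. -/
def dTopPow (m : ℕ) : (b : ℕ) → (mk m ⟶ mk (m + b))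
  | 0 => 𝟙 _
  | b + 1 => dTopPow m b ≫ δ (Fin.last (m + b + 1))

lemma isInert_dBot (m : ℕ) : IsInert (δ (0 : Fin (m + 2)) : mk m ⟶ mk (m + 1)) := by
  intro i
  show ((0 : Fin (m+2)).succAbove i.succ : ℕ) = ((0 : Fin (m+2)).succAbove i.castSucc : ℕ) + 1
  rw [Fin.succAbove_of_le_castSucc _ _ (by simp [Fin.le_def]),
    Fin.succAbove_of_le_castSucc _ _ (by simp [Fin.le_def])]
  simp

lemma isInert_dTop (m : ℕ) : IsInert (δ (Fin.last (m + 1)) : mk m ⟶ mk (m + 1)) := by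
  intro i
  show ((Fin.last (m+1)).succAbove i.succ : ℕ) = ((Fin.last (m+1)).succAbove i.castSucc : ℕ) + 1
  have hi : (i : ℕ) < m := by have := i.isLt; simpa [SimplexCategory.len_mk] using this
  rw [Fin.succAbove_of_castSucc_lt _ _ (by
      simp only [Fin.lt_def, Fin.coe_castSucc, Fin.val_succ, Fin.val_last]; omega),
    Fin.succAbove_of_castSucc_lt _ _ (by
      simp only [Fin.lt_def, Fin.coe_castSucc, Fin.val_last]; omega)]
  simp

lemma isInert_dBotPow (m a : ℕ) : IsInert (dBotPow m a) := by
  induction a with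
  | zero => exact isInert_id _
  | succ a ih => exact isInert_comp ih (isInert_dBot _)

lemma isInert_dTopPow (m b : ℕ) : IsInert (dTopPow m b) := by
  induction b with
  | zero => exact isInert_id _
  | succ b ih => exact isInert_comp ih (isInert_dTop _)

/-- The subcategory `Δ_inert` of the simplex category: objects are natural
numbers `n` (standing for the ordinal `[n]`), and morphisms `m ⟶ n` are the
inert maps `[m] → [n]`. -/
structure InertCat where
  n : ℕ

instance : Category InertCat where
  Hom x y := {f : mk x.n ⟶ mk y.n // IsInert f}
  id x := ⟨𝟙 _, isInert_id _⟩
  comp f g := ⟨f.1 ≫ g.1, isInert_comp f.2 g.2⟩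
  id_comp f := by apply Subtype.ext; simp
  comp_id f := by apply Subtype.ext; simp
  assoc f g h := by apply Subtype.ext; simp

/-- The inclusion `j : Δ_inert → Δ`. -/
def jF : InertCat ⥤ SimplexCategory where
  obj x := mk x.n
  map f := f.1
  map_id _ := rfl
  map_comp _ _ := rfl

/-- The top vertex `[0] → [m]` as a morphism of `Δ_inert`. -/
def topV (m : ℕ) : (⟨0⟩ : InertCat) ⟶ ⟨m⟩ :=
  ⟨vtx m (Fin.last m), isInert_from_zero _⟩

/-- The bottom vertex `[0] → [m]` as a morphism of `Δ_inert`. -/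
def botV (m : ℕ) : (⟨0⟩ : InertCat) ⟶ ⟨m⟩ :=
  ⟨vtx m 0, isInert_from_zero _⟩

/-- The outer coface `d⊥ : [0] → [1]` (omitting `0`) as a morphism of `Δ_inert`. -/
def dBotI : (⟨0⟩ : InertCat) ⟶ ⟨1⟩ := ⟨δ (0 : Fin 2), isInert_from_zero _⟩

/-- The outer coface `d⊤ : [0] → [1]` (omitting the top) as a morphism of `Δ_inert`. -/
def dTopI : (⟨0⟩ : InertCat) ⟶ ⟨1⟩ := ⟨δ (1 : Fin 2), isInert_from_zero _⟩

/-- The category with objects `ℕ` and morphisms `m ⟶ n` the pairs `(a,b)`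
with `a + m + b = n`, composed by componentwise addition. -/
structure NPairCat where
  n : ℕ

instance : Category NPairCat where
  Hom x y := {p : ℕ × ℕ // p.1 + x.n + p.2 = y.n}
  id x := ⟨(0, 0), by omega⟩
  comp f g := ⟨(f.1.1 + g.1.1, f.1.2 + g.1.2), by have h1 := f.2; have h2 := g.2; omega⟩
  id_comp f := by apply Subtype.ext; obtain ⟨⟨a, b⟩, h⟩ := f; simp
  comp_id f := by apply Subtype.ext; obtain ⟨⟨a, b⟩, h⟩ := f; simp
  assoc f g h := by apply Subtype.ext; simp; omega

/-- The one-object category `Bℕ` with endomorphism monoid `(ℕ,+)`. -/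
abbrev BN := SingleObj (Multiplicative ℕ)

/-- The twisted arrow category of a category `C`: objects are arrows of `C`,
and a morphism from `f'` to `f` is a pair `(a, b)` with `f = a ≫ f' ≫ b`,
i.e. `f = b ∘ f' ∘ a`. -/
def Tw (C : Type u) [Category.{v} C] := Σ (x : C) (y : C), x ⟶ y

instance (C : Type u) [Category.{v} C] : Category (Tw C) where
  Hom f g := {p : (g.1 ⟶ f.1) × (f.2.1 ⟶ g.2.1) // g.2.2 = p.1 ≫ f.2.2 ≫ p.2}
  id f := ⟨(𝟙 _, 𝟙 _), by simp⟩
  comp u v := ⟨(v.1.1 ≫ u.1.1, u.1.2 ≫ v.1.2), by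
    have hu := u.2
    have hv := v.2
    simp only []
    simp only [hv, hu, Category.assoc]⟩
  id_comp u := by apply Subtype.ext; simp
  comp_id u := by apply Subtype.ext; simp
  assoc u v w := by apply Subtype.ext; simp

/-- Extract the pair of natural numbers underlying a morphism in `Tw Bℕ`. -/
def twBNPair {f g : Tw BN} (u : f ⟶ g) : ℕ × ℕ :=
  (Multiplicative.toAdd (show Multiplicative ℕ from u.1.1),
   Multiplicative.toAdd (show Multiplicative ℕ from u.1.2))

/-- Extract the natural number underlying an object of `Tw Bℕ`. -/
def twBNObj (f : Tw BN) : ℕ :=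
  Multiplicative.toAdd (show Multiplicative ℕ from f.2.2)

/-- The type of `k`-simplices of the free simplicial set on `A : Δ_inert^op → Set`:
the explicit formula `X_k = ∑_{α : [k] ↠ [n] active} A_n`. -/
def FD (A : InertCat ᵒᵖ ⥤ Type) (k : ℕ) : Type :=
  Σ n : ℕ, {α : mk k ⟶ mk n // IsActive α} × A.obj (Opposite.op ⟨n⟩)

/-- The action of an active map `g : [k'] → [k]` on the free simplicial set,
given by precomposition on the indexing active maps and the identity on summands. -/
def FDmap (A : InertCat ᵒᵖ ⥤ Type) {k' k : ℕ} (g : mk k' ⟶ mk k) (hg : IsActive g) :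
    FD A k → FD A k' :=
  fun x => ⟨x.1, ⟨g ≫ x.2.1.1, isActive_comp hg x.2.1.2⟩, x.2.2⟩

/-- The map of free simplicial sets induced by a natural transformation. -/
def FDmapNat {A' A : InertCat ᵒᵖ ⥤ Type} (η : A' ⟶ A) (k : ℕ) : FD A' k → FD A k :=
  fun x => ⟨x.1, x.2.1, η.app _ x.2.2⟩

/-- The tuple of successive differences of a map `α : [k] → [n]`. -/
def diff {k n : ℕ} (α : mk k ⟶ mk n) : Fin k → ℕ :=
  fun i => (α.toOrderHom i.succ : ℕ) - (α.toOrderHom i.castSucc : ℕ)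

/-- The set `Act(k)` of active maps out of `[k]` (with arbitrary codomain). -/
def ActFrom (k : ℕ) : Type :=
  Σ n : ℕ, {α : mk k ⟶ mk n // IsActive α}

/-- The difference map `Act(k) → ℕ^k`. -/
def diffMap (k : ℕ) : ActFrom k → (Fin k → ℕ) := fun x => diff x.2.1

/-- The action of `φ : [k'] → [k]` on the `k`-simplices `ℕ^k` of the nerve of
`Bℕ`: the `i`-th entry of the result is the sum of the entries from `φ(i-1)`
to `φ(i) - 1`. -/
def nerveBNAct {k' k : ℕ} (φ : mk k' ⟶ mk k) (x : Fin k → ℕ) : Fin k' → ℕ :=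
  fun i => ∑ j ∈ Finset.Ico ((φ.toOrderHom i.castSucc : ℕ)) ((φ.toOrderHom i.succ : ℕ)),
    (fun t => if h : t < k then x ⟨t, h⟩ else 0) j

/-- The inert map `γᵢ : [nᵢ] → [n]`, `j ↦ α(i) + j` (where `nᵢ = α(i+1) - α(i)`),
appearing in the active-inert factorization of `α ∘ ρᵢ`. -/
def segIncl {k n : ℕ} (α : mk k ⟶ mk n) (i : Fin k) : mk (diff α i) ⟶ mk n :=
  mkHom ⟨fun j => ⟨(α.toOrderHom i.castSucc : ℕ) + (j : ℕ), by
      have hj : (j : ℕ) ≤ diff α i := by have := j.isLt; simp [len_mk] at this; omega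
      have hle : (α.toOrderHom i.castSucc : ℕ) ≤ (α.toOrderHom i.succ : ℕ) :=
        α.toOrderHom.monotone (Fin.castSucc_le_succ i)
      have := (α.toOrderHom i.succ).isLt
      simp only [diff] at hj
      simp [len_mk] at *
      omega⟩,
    fun a b h => by
      simp only [Fin.mk_le_mk]
      have : (a : ℕ) ≤ (b : ℕ) := h
      omega⟩

lemma isInert_segIncl {k n : ℕ} (α : mk k ⟶ mk n) (i : Fin k) :
    IsInert (segIncl α i) := by
  intro t
  show ((α.toOrderHom i.castSucc : ℕ) + (t.succ : ℕ)) =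
    ((α.toOrderHom i.castSucc : ℕ) + (t.castSucc : ℕ)) + 1
  simp
  omega

/-- `γᵢ` as a morphism of `Δ_inert`. -/
def segInclI {k n : ℕ} (α : mk k ⟶ mk n) (i : Fin k) : (⟨diff α i⟩ : InertCat) ⟶ ⟨n⟩ :=
  ⟨segIncl α i, isInert_segIncl α i⟩

/-- The Segal map of the free simplicial set `X = j_!(A)`: it sends the
`α`-summand `A_n` of `X_k` to the tuple of its restrictions along the `γᵢ`. -/
def fdSegalMap (A : InertCat ᵒᵖ ⥤ Type) (k : ℕ) : FD A k → (Fin k → FD A 1) :=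
  fun x i => ⟨diff x.2.1.1 i, ⟨mu (diff x.2.1.1 i), isActive_mu _⟩,
    A.map (segInclI x.2.1.1 i).op x.2.2⟩

/-- Matching (fiber product over `X_0`) condition for a tuple in `(X_1)^k`:
consecutive components agree in `A_0` under top/bottom vertex restrictions. -/
def fdMatching (A : InertCat ᵒᵖ ⥤ Type) (k : ℕ) (t : Fin k → FD A 1) : Prop :=
  ∀ (i : Fin k) (h : (i : ℕ) + 1 < k),
    A.map (topV (t i).1).op ((t i).2.2) =
      A.map (botV (t ⟨(i : ℕ) + 1, h⟩).1).op ((t ⟨(i : ℕ) + 1, h⟩).2.2)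

/-- The restriction map `A_n → ∏ᵢ A_{nᵢ}` along the covering family `{γᵢ}`
associated to an active map `α : [k] → [n]`. -/
def resMap (A : InertCat ᵒᵖ ⥤ Type) {k n : ℕ} (α : mk k ⟶ mk n) :
    A.obj (Opposite.op ⟨n⟩) → ∀ i : Fin k, A.obj (Opposite.op ⟨diff α i⟩) :=
  fun a i => A.map (segInclI α i).op a

/-- Matching (fiber product over `A_0`) condition for a tuple in `∏ᵢ A_{nᵢ}`. -/
def resMatching (A : InertCat ᵒᵖ ⥤ Type) {k n : ℕ} (α : mk k ⟶ mk n)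
    (t : ∀ i : Fin k, A.obj (Opposite.op ⟨diff α i⟩)) : Prop :=
  ∀ (i : Fin k) (h : (i : ℕ) + 1 < k),
    A.map (topV (diff α i)).op (t i) =
      A.map (botV (diff α ⟨(i : ℕ) + 1, h⟩)).op (t ⟨(i : ℕ) + 1, h⟩)

/-- The length functor from the path category of a quiver to `Bℕ`. -/
def lengthFunctor (Q : Type u) [Quiver.{u + 1} Q] : Paths Q ⥤ BN where
  obj _ := SingleObj.star _
  map p := Multiplicative.ofAdd p.length
  map_id _ := rfl
  map_comp {x y z} p q := by
    show Multiplicative.ofAdd (p.comp q).length = _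
    show _ = (Multiplicative.ofAdd q.length) * (Multiplicative.ofAdd p.length)
    erw [Quiver.Path.length_comp, ← ofAdd_add]
    exact congrArg Multiplicative.ofAdd (Nat.add_comm _ _)

/-- A functor to `Bℕ` is CULF if every factorization in `(ℕ,+)` of the image of
a morphism `f` lifts uniquely to a factorization of `f`. -/
def IsCULF {C : Type u} [Category.{v} C] (F : C ⥤ BN) : Prop :=
  ∀ {x y : C} (f : x ⟶ y) (a b : Multiplicative ℕ), F.map f = a * b →
    ∃! p : Σ z : C, (x ⟶ z) × (z ⟶ y),
      p.2.1 ≫ p.2.2 = f ∧ F.map p.2.1 = a ∧ F.map p.2.2 = b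

/-- The category `𝕃` of finite linear orders `{1,…,n}` and convex monotone
injections. -/
structure LinOrdCat where
  n : ℕ

/-- A convex monotone injection between finite linear orders. -/
def IsConvexEmb {m n : ℕ} (f : Fin m → Fin n) : Prop :=
  StrictMono f ∧ ∀ (a b : Fin m) (c : Fin n), f a ≤ c → c ≤ f b → ∃ x, f x = c

instance : Category LinOrdCat where
  Hom x y := {f : Fin x.n → Fin y.n // IsConvexEmb f}
  id x := ⟨id, strictMono_id, fun _ _ c _ _ => ⟨c, rfl⟩⟩
  comp f g := ⟨g.1 ∘ f.1, (g.2.1).comp f.2.1, by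
    intro a b c h1 h2
    obtain ⟨w, hw⟩ := g.2.2 (f.1 a) (f.1 b) c h1 h2
    have ha : f.1 a ≤ w := by
      rw [← (g.2.1).le_iff_le]; rw [hw]; exact h1
    have hb : w ≤ f.1 b := by
      rw [← (g.2.1).le_iff_le]; rw [hw]; exact h2
    obtain ⟨v, hv⟩ := f.2.2 a b w ha hb
    exact ⟨v, by simp [Function.comp, hv, hw]⟩⟩
  id_comp f := by apply Subtype.ext; rfl
  comp_id f := by apply Subtype.ext; rfl
  assoc f g h := by apply Subtype.ext; rfl

/- An active map `g` acts on `j_!(A)` only on the index of a summand and `η` acts only inside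
the summands. So a `k`-simplex of `j_!(A')` is determined by its image in `j_!(A)` (which
fixes the index) together with its `g`-face (which fixes the element of the summand), and any
compatible pair of such data comes from one. -/

section CULF

variable {A' A : InertCat ᵒᵖ ⥤ Type} {k' k : ℕ}

lemma FD.mk_eq_mk_iff {n : ℕ} {α β : {α : mk k ⟶ mk n // IsActive α}}
    {a b : A.obj (Opposite.op ⟨n⟩)} :
    (⟨n, α, a⟩ : FD A k) = ⟨n, β, b⟩ ↔ α = β ∧ a = b := by
  rw [Sigma.mk.inj_iff, heq_iff_eq, Prod.mk.injEq]
  simp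

lemma eq_of_FDmapNat_eq_of_FDmap_eq (η : A' ⟶ A) {g : mk k' ⟶ mk k} {hg : IsActive g}
    {x₁ x₂ : FD A' k} (hη : FDmapNat η k x₁ = FDmapNat η k x₂)
    (hres : FDmap A' g hg x₁ = FDmap A' g hg x₂) : x₁ = x₂ := by
  obtain ⟨n, α₁, a₁⟩ := x₁
  obtain ⟨m, α₂, a₂⟩ := x₂
  obtain rfl : n = m := congrArg Sigma.fst hη
  exact FD.mk_eq_mk_iff.mpr ⟨(FD.mk_eq_mk_iff.mp hη).1, (FD.mk_eq_mk_iff.mp hres).2⟩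

lemma exists_FDmapNat_eq_and_FDmap_eq (η : A' ⟶ A) {g : mk k' ⟶ mk k} (hg : IsActive g)
    {x : FD A k} {y' : FD A' k'} (hxy : FDmapNat η k' y' = FDmap A g hg x) :
    ∃ x' : FD A' k, FDmapNat η k x' = x ∧ FDmap A' g hg x' = y' := by
  obtain ⟨n, α, a⟩ := x
  obtain ⟨m, β, b⟩ := y'
  obtain rfl : m = n := congrArg Sigma.fst hxy
  obtain ⟨hβ, hb⟩ := FD.mk_eq_mk_iff.mp hxy
  exact ⟨⟨m, α, b⟩, FD.mk_eq_mk_iff.mpr ⟨rfl, hb⟩, FD.mk_eq_mk_iff.mpr ⟨hβ.symm, rfl⟩⟩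

end CULF

/-- For any map `A' → A` of presheaves on `Δ_inert`, the
induced map `j_!(A') → j_!(A)` is CULF: for every active `g : [k'] → [k]` the
naturality square is a pullback of sets. -/
theorem lan_map_isCULF (A' A : InertCat ᵒᵖ ⥤ Type) (η : A' ⟶ A) {k' k : ℕ}
    (g : mk k' ⟶ mk k) (hg : IsActive g) (x : FD A k) (y' : FD A' k')
    (hxy : FDmapNat η k' y' = FDmap A g hg x) :
    ∃! x' : FD A' k, FDmapNat η k x' = x ∧ FDmap A' g hg x' = y' := by
  obtain ⟨x', hx'⟩ := exists_FDmapNat_eq_and_FDmap_eq η hg hxy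
  exact ⟨x', hx', fun z hz =>
    eq_of_FDmapNat_eq_of_FDmap_eq η (hz.1.trans hx'.1.symm) (hz.2.trans hx'.2.symm)⟩

end FreeDecompPaper
end

section
/- For a presheaf A : Δ_inert^op → Set, the free simplicial set X = j_!(A) is Segal (all Segal maps X_k → X_1 ×_{X_0} ⋯ ×_{X_0} X_1 are bijections) if and only if for every n and every reduced covering family {γ_i : [n_i] → [n]}_{i=1..k} arising from an active map α : [k] → [n], the induced map A_n → A_{n_1} ×_{A_0} ⋯ ×_{A_0} A_{n_k} is a bijection. -/
/-! Preliminaries: the active-inert factorization system on the simplex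
category, the inert subcategory `Δ_inert`, the one-object category `Bℕ`,
twisted arrow categories, and the explicit free decomposition space formula,
following Hackney–Kock, "Free decomposition spaces". -/

open CategoryTheory SimplexCategory

namespace FreeDecompPaper

/-! An active map `α : [k] → [n]` is determined by its tuple of differences `(nᵢ)`, which can be
any `k`-tuple of naturals (and then `n = ∑ nᵢ`). Since an active map out of `[1]` is unique,
`X₁ = ∐ₘ Aₘ`, so `(X₁)ᵏ` is the disjoint union over active `α` out of `[k]` of `∏ᵢ A_{nᵢ}`,
and the Segal map `X_k = ∐_α Aₙ → (X₁)ᵏ` is the coproduct of the restriction maps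
`Aₙ → ∏ᵢ A_{nᵢ}`, under which the two matching conditions correspond. A coproduct of maps is
injective, resp. has image the matching tuples, iff every summand map is; so the equivalence
holds for each `k` separately. -/

lemma IsActive.val_apply_eq_partialSum {k n : ℕ} {α : mk k ⟶ mk n} (hα : IsActive α)
    (j : Fin (k + 1)) : (α.toOrderHom j : ℕ) = Fin.partialSum (diff α) j := by
  induction j using Fin.induction with
  | zero => simp [hα.1]
  | succ i ih =>
    have := α.toOrderHom.monotone (Fin.castSucc_le_succ i)
    rw [Fin.partialSum_succ, ← ih, diff, Fin.le_def] at *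
    omega

lemma partialSum_last {M : Type*} [AddCommMonoid M] {k : ℕ} (d : Fin k → M) :
    Fin.partialSum d (Fin.last k) = ∑ i, d i := by
  rw [Fin.partialSum, Fin.val_last, List.take_of_length_le (by simp), List.sum_ofFn]

lemma IsActive.eq_sum_diff {k n : ℕ} {α : mk k ⟶ mk n} (hα : IsActive α) :
    n = ∑ i, diff α i := by
  simpa [hα.2, partialSum_last] using hα.val_apply_eq_partialSum (Fin.last k)

lemma IsActive.ext_of_diff_eq {k n : ℕ} {α β : mk k ⟶ mk n} (hα : IsActive α)
    (hβ : IsActive β) (h : diff α = diff β) : α = β := by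
  ext j : 3
  apply Fin.ext
  rw [hα.val_apply_eq_partialSum, hβ.val_apply_eq_partialSum, h]

lemma monotone_partialSum {M : Type*} [AddCommMonoid M] [PartialOrder M] [CanonicallyOrderedAdd M]
    {k : ℕ} (d : Fin k → M) : Monotone (Fin.partialSum d) :=
  Fin.monotone_iff_le_succ.2 fun i => by simp [Fin.partialSum_succ]

def ofDiff {k : ℕ} (d : Fin k → ℕ) : mk k ⟶ mk (∑ i, d i) :=
  mkHom ⟨fun j => ⟨Fin.partialSum d j, Nat.lt_succ_of_le <|
    partialSum_last d ▸ monotone_partialSum d (Fin.le_last j)⟩,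
    fun _ _ h => monotone_partialSum d h⟩

lemma val_ofDiff_apply {k : ℕ} (d : Fin k → ℕ) (j : Fin (k + 1)) :
    ((ofDiff d).toOrderHom j : ℕ) = Fin.partialSum d j := rfl

lemma isActive_ofDiff {k : ℕ} (d : Fin k → ℕ) : IsActive (ofDiff d) :=
  ⟨Fin.ext (Fin.partialSum_zero d), Fin.ext (partialSum_last d)⟩

lemma diff_ofDiff {k : ℕ} (d : Fin k → ℕ) : diff (ofDiff d) = d := by
  ext i
  simp [diff, val_ofDiff_apply, Fin.partialSum_succ]

lemma IsActive.eq_mu {m : ℕ} {f : mk 1 ⟶ mk m} (hf : IsActive f) : f = mu m :=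
  hf.ext_of_diff_eq (isActive_mu m) <| funext fun i => by
    have h1 : f.toOrderHom 1 = Fin.last m := hf.2
    fin_cases i
    show (f.toOrderHom 1 : ℕ) - (f.toOrderHom 0 : ℕ) = 1 * m - 0 * m
    simp [h1, hf.1]

lemma topV_comp_segInclI {k n : ℕ} (α : mk k ⟶ mk n) (i : Fin k) (h : (i : ℕ) + 1 < k) :
    topV (diff α i) ≫ segInclI α i =
      botV (diff α ⟨(i : ℕ) + 1, h⟩) ≫ segInclI α ⟨(i : ℕ) + 1, h⟩ := by
  have hmono := α.toOrderHom.monotone (Fin.castSucc_le_succ i)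
  have hsucc : (⟨(i : ℕ) + 1, h⟩ : Fin k).castSucc = i.succ := Fin.ext (by simp)
  apply Subtype.ext
  ext j : 3
  apply Fin.ext
  show (α.toOrderHom i.castSucc : ℕ) + (Fin.last (diff α i) : ℕ)
    = (α.toOrderHom (⟨(i : ℕ) + 1, h⟩ : Fin k).castSucc : ℕ)
      + ((0 : Fin (diff α ⟨(i : ℕ) + 1, h⟩ + 1)) : ℕ)
  rw [hsucc, Fin.val_last, Fin.val_zero, diff]
  rw [Fin.le_def] at hmono
  omega

section

variable (A : InertCat ᵒᵖ ⥤ Type)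

lemma range_resMap_subset {k n : ℕ} (α : mk k ⟶ mk n) :
    Set.range (resMap A α) ⊆ {t | resMatching A α t} := by
  rintro _ ⟨a, rfl⟩ i h
  simp only [resMap, ← Functor.map_comp_apply, ← op_comp, topV_comp_segInclI α i h]

def summandIncl {k n : ℕ} {α : mk k ⟶ mk n} (hα : IsActive α) :
    A.obj (Opposite.op ⟨n⟩) → FD A k :=
  fun a => ⟨n, ⟨α, hα⟩, a⟩

lemma summandIncl_injective {k n : ℕ} {α : mk k ⟶ mk n} (hα : IsActive α) :
    Function.Injective (summandIncl A hα) := fun _ _ h =>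
  congrArg Prod.snd (eq_of_heq (Sigma.mk.inj h).2)

lemma exists_eq_summandIncl_of_diff_eq {k n : ℕ} {α : mk k ⟶ mk n} (hα : IsActive α) (x : FD A k)
    (h : diff x.2.1.1 = diff α) : ∃ a, x = summandIncl A hα a := by
  obtain ⟨m, ⟨β, hβ⟩, b⟩ := x
  obtain rfl : m = n := hβ.eq_sum_diff.trans (h ▸ hα.eq_sum_diff.symm)
  obtain rfl := hβ.ext_of_diff_eq hα h
  exact ⟨b, rfl⟩

lemma eq_summandIncl_mu (x : FD A 1) : x = summandIncl A (isActive_mu x.1) x.2.2 := by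
  obtain ⟨m, ⟨β, hβ⟩, b⟩ := x
  obtain rfl := hβ.eq_mu
  rfl

def tupleIncl {k : ℕ} {d : Fin k → ℕ} (s : ∀ i, A.obj (Opposite.op ⟨d i⟩)) : Fin k → FD A 1 :=
  fun i => summandIncl A (isActive_mu (d i)) (s i)

lemma tupleIncl_injective {k : ℕ} {d : Fin k → ℕ} :
    Function.Injective (tupleIncl A (d := d)) := fun _ _ h =>
  funext fun i => summandIncl_injective A _ (congrFun h i)

lemma exists_eq_tupleIncl {k : ℕ} (t : Fin k → FD A 1) :
    ∃ (n : ℕ) (α : mk k ⟶ mk n), IsActive α ∧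
      ∃ s : ∀ i, A.obj (Opposite.op ⟨diff α i⟩), t = tupleIncl A s := by
  have reindex : ∀ {d d' : Fin k → ℕ}, d = d' → ∀ s : ∀ i, A.obj (Opposite.op ⟨d i⟩),
      ∃ s' : ∀ i, A.obj (Opposite.op ⟨d' i⟩), tupleIncl A s = tupleIncl A s' := by
    rintro d _ rfl s
    exact ⟨s, rfl⟩
  obtain ⟨s, hs⟩ := reindex (diff_ofDiff fun i => (t i).1).symm fun i => (t i).2.2
  exact ⟨_, _, isActive_ofDiff _, s, (funext fun i => eq_summandIncl_mu A (t i)).trans hs⟩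

lemma fdSegalMap_summandIncl {k n : ℕ} {α : mk k ⟶ mk n} (hα : IsActive α)
    (a : A.obj (Opposite.op ⟨n⟩)) :
    fdSegalMap A k (summandIncl A hα a) = tupleIncl A (resMap A α a) :=
  rfl

lemma fdMatching_tupleIncl_iff {k n : ℕ} {α : mk k ⟶ mk n}
    (s : ∀ i, A.obj (Opposite.op ⟨diff α i⟩)) :
    fdMatching A k (tupleIncl A s) ↔ resMatching A α s :=
  Iff.rfl

lemma range_fdSegalMap_subset (k : ℕ) :
    Set.range (fdSegalMap A k) ⊆ {t | fdMatching A k t} := by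
  rintro _ ⟨⟨n, ⟨α, _⟩, a⟩, rfl⟩
  exact range_resMap_subset A α ⟨a, rfl⟩

lemma injective_fdSegalMap_iff (k : ℕ) :
    Function.Injective (fdSegalMap A k) ↔
      ∀ (n : ℕ) (α : mk k ⟶ mk n), IsActive α → Function.Injective (resMap A α) := by
  constructor
  · intro h n α hα
    have hcomp : fdSegalMap A k ∘ summandIncl A hα = tupleIncl A ∘ resMap A α :=
      funext (fdSegalMap_summandIncl A hα)
    rw [← (tupleIncl_injective A).of_comp_iff, ← hcomp]
    exact h.comp (summandIncl_injective A hα)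
  · intro h x y hxy
    obtain ⟨n, ⟨α, hα⟩, b⟩ := y
    obtain ⟨a, rfl⟩ := exists_eq_summandIncl_of_diff_eq A hα x (congrArg (fun t i => (t i).1) hxy)
    exact congrArg _ (h n α hα (tupleIncl_injective A hxy))

lemma range_fdSegalMap_eq_iff (k : ℕ) :
    Set.range (fdSegalMap A k) = {t | fdMatching A k t} ↔
      ∀ (n : ℕ) (α : mk k ⟶ mk n), IsActive α →
        Set.range (resMap A α) = {t | resMatching A α t} := by
  simp only [Set.Subset.antisymm_iff, range_fdSegalMap_subset, range_resMap_subset, true_and]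
  constructor
  · intro h n α hα s hs
    obtain ⟨x, hx⟩ := h ((fdMatching_tupleIncl_iff A s).2 hs)
    obtain ⟨a, rfl⟩ := exists_eq_summandIncl_of_diff_eq A hα x (congrArg (fun t i => (t i).1) hx)
    rw [fdSegalMap_summandIncl] at hx
    exact ⟨a, tupleIncl_injective A hx⟩
  · intro h t ht
    obtain ⟨n, α, hα, s, rfl⟩ := exists_eq_tupleIncl A t
    obtain ⟨a, rfl⟩ := h n α hα ((fdMatching_tupleIncl_iff A s).1 ht)
    exact ⟨summandIncl A hα a, fdSegalMap_summandIncl A hα a⟩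

end

/-- The free simplicial set `j_!(A)` is Segal (each Segal map
is injective with image the matching tuples) if and only if `A` is a sheaf:
for every reduced covering family `{γᵢ : [nᵢ] → [n]}` arising from an active
map `α : [k] → [n]`, the restriction map `A_n → A_{n₁} ×_{A₀} ⋯ ×_{A₀} A_{n_k}`
is a bijection. -/
theorem lan_segal_iff_sheaf (A : InertCat ᵒᵖ ⥤ Type) :
    (∀ k : ℕ, 2 ≤ k →
      Function.Injective (fdSegalMap A k) ∧
      Set.range (fdSegalMap A k) = {t | fdMatching A k t}) ↔
    (∀ (k n : ℕ), 2 ≤ k → ∀ α : mk k ⟶ mk n, IsActive α →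
      Function.Injective (resMap A α) ∧
      Set.range (resMap A α) = {t | resMatching A α t}) := by
  simp only [injective_fdSegalMap_iff, range_fdSegalMap_eq_iff, ← forall_and]
  exact forall_congr' fun k => ⟨fun h n hk α hα => h hk n α hα, fun h hk n α hα => h n hk α hα⟩

end FreeDecompPaper
end

section
/- A category C admits a CULF functor to Bℕ if and only if C is free on a directed graph. Here a functor F : C → Bℕ is CULF if for every morphism f in C and every factorization F(f) = b + a in ℕ, there is a unique factorization f = f_2 ∘ f_1 in C with F(f_1) = a and F(f_2) = b. -/
/-! Preliminaries: the active-inert factorization system on the simplex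
category, the inert subcategory `Δ_inert`, the one-object category `Bℕ`,
twisted arrow categories, and the explicit free decomposition space formula,
following Hackney–Kock, "Free decomposition spaces". -/

open CategoryTheory SimplexCategory

namespace FreeDecompPaper

/-! A CULF functor `F : C ⥤ Bℕ` makes every morphism of degree zero an identity: its
factorizations `𝟙 ≫ f` and `f ≫ 𝟙` both lie over `0 + 0`, hence coincide. Lifting
`n + 1 = n + 1` peels off a last factor of degree one, and uniqueness of that lift makes the
peeling unique.
Hence every morphism is uniquely a composite of degree-one morphisms, i.e. `C` is the path
category of the quiver of its degree-one morphisms. Conversely, the length functor of a path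
category is CULF because a path splits uniquely at any position, and CULF functors are stable
under precomposition with isomorphisms of categories. -/

instance _root_.CategoryTheory.ULiftHom.isIso_up (C : Type u) [Category.{v} C] :
    (ULiftHom.up : C ⥤ ULiftHom.{w} C).IsIso where
  faithful := ULiftHom.equiv.faithful_functor
  full := ULiftHom.equiv.full_functor
  bijective_obj := ULiftHom.objEquiv.bijective

def _root_.CategoryTheory.IsoCat.toCatIso {C D : Type u} [Category.{v} C] [Category.{v} D]
    (e : IsoCat C D) : Cat.of C ≅ Cat.of D where
  hom := e.functor.toCatHom
  inv := e.inverse.toCatHom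
  hom_inv_id := congrArg Functor.toCatHom e.unit_eq.symm
  inv_hom_id := congrArg Functor.toCatHom e.counit_eq

def _root_.CategoryTheory.Iso.toIsoCat {C D : Cat} (I : C ≅ D) : IsoCat C D where
  functor := I.hom.toFunctor
  inverse := I.inv.toFunctor
  unit_eq := congrArg Cat.Hom.toFunctor I.hom_inv_id.symm
  counit_eq := congrArg Cat.Hom.toFunctor I.inv_hom_id

theorem _root_.Quiver.Path.sigma_eq_of_comp_eq {V : Type*} [Quiver V] {a b v w : V}
    {p₁ : Quiver.Path a v} {p₂ : Quiver.Path v b} {q₁ : Quiver.Path a w}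
    {q₂ : Quiver.Path w b} (h : p₁.comp p₂ = q₁.comp q₂) (hl : p₁.length = q₁.length) :
    (⟨v, p₁, p₂⟩ : Σ c, Quiver.Path a c × Quiver.Path c b) = ⟨w, q₁, q₂⟩ := by
  have vertex_at_length : ∀ {c} (r₁ : Quiver.Path a c) (r₂ : Quiver.Path c b),
      (r₁.comp r₂).vertices[r₁.length]? = some c := by simp
  obtain rfl : w = v := by
    simpa [h, hl, vertex_at_length] using vertex_at_length p₁ p₂
  obtain ⟨rfl, rfl⟩ := (Quiver.Path.comp_inj' hl).mp h
  rfl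

section CULF

variable {C : Type u} [Category.{v} C] {F : C ⥤ BN}

theorem IsCULF.sigma_eq (hF : IsCULF F) {x y z z' : C} {f₁ : x ⟶ z} {f₂ : z ⟶ y}
    {g₁ : x ⟶ z'} {g₂ : z' ⟶ y} (h : f₁ ≫ f₂ = g₁ ≫ g₂) (h₁ : F.map f₁ = F.map g₁)
    (h₂ : F.map f₂ = F.map g₂) :
    (⟨z, f₁, f₂⟩ : Σ w, (x ⟶ w) × (w ⟶ y)) = ⟨z', g₁, g₂⟩ :=
  (hF (f₁ ≫ f₂) (F.map f₁) (F.map f₂)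
    (by rw [F.map_comp, SingleObj.comp_as_mul, mul_comm])).unique
      ⟨rfl, rfl, rfl⟩ ⟨h.symm, h₁.symm, h₂.symm⟩

theorem IsCULF.eq_eqToHom_of_map_eq_id (hF : IsCULF F) {x y : C} (f : x ⟶ y)
    (hf : F.map f = 𝟙 _) : ∃ h : x = y, f = eqToHom h := by
  have h := hF.sigma_eq (f₁ := 𝟙 x) (f₂ := f) (g₁ := f) (g₂ := 𝟙 y) (by simp)
    (by rw [hf, F.map_id]) (by rw [hf, F.map_id]; rfl)
  obtain ⟨rfl, h⟩ := Sigma.mk.inj_iff.mp h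
  exact ⟨rfl, (congrArg Prod.fst (eq_of_heq h)).symm⟩

theorem IsCULF.comp_of_isIso {D : Type*} [Category D] (G : D ⥤ C) [G.IsIso] (hF : IsCULF F) :
    IsCULF (G ⋙ F) := by
  intro x y f a b hab
  let e : (Σ z, (x ⟶ z) × (z ⟶ y)) ≃ Σ w, (G.obj x ⟶ w) × (w ⟶ G.obj y) :=
    Equiv.sigmaCongr G.objEquiv fun z =>
      (Functor.FullyFaithful.ofFullyFaithful G).homEquiv.prodCongr
        (Functor.FullyFaithful.ofFullyFaithful G).homEquiv
  refine (e.existsUnique_congr fun p => ?_).mpr (hF (G.map f) a b hab)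
  change _ ↔ G.map p.2.1 ≫ G.map p.2.2 = G.map f ∧ _
  rw [← G.map_comp, G.map_injective.eq_iff]
  rfl

end CULF

theorem isCULF_lengthFunctor (Q : Type u) [Quiver.{u + 1} Q] : IsCULF (lengthFunctor Q) := by
  rintro (x : Q) (y : Q) (f : Quiver.Path x y) a b hab
  have hlen : f.length = a.toAdd + b.toAdd := congrArg Multiplicative.toAdd hab
  obtain ⟨v, p₁, p₂, rfl, hp₁⟩ := Quiver.Path.exists_eq_comp_of_le_length f (n := a.toAdd)
    (by omega)
  have hp₂ : p₂.length = b.toAdd := by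
    rw [Quiver.Path.length_comp] at hlen
    omega
  refine ⟨⟨v, p₁, p₂⟩,
    ⟨rfl, congrArg Multiplicative.ofAdd hp₁, congrArg Multiplicative.ofAdd hp₂⟩, ?_⟩
  rintro ⟨(w : Q), (q₁ : Quiver.Path x w), (q₂ : Quiver.Path w y)⟩
    ⟨hq, hq₁, -⟩
  change (⟨w, q₁, q₂⟩ : Σ c : Q, Quiver.Path x c × Quiver.Path c y) = ⟨v, p₁, p₂⟩
  exact Quiver.Path.sigma_eq_of_comp_eq hq ((congrArg Multiplicative.toAdd hq₁).trans hp₁.symm)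

section DegreeOne

variable {C : Type u} [SmallCategory C]

/-- The objects of `C`, viewed as the vertices of the quiver whose edges are the morphisms
of degree one under `F`. -/
def DegreeOne (_F : C ⥤ BN) : Type u := C

instance (F : C ⥤ BN) : Quiver.{u + 1} (DegreeOne F) where
  Hom x y := ULift.{u + 1} {f : Quiver.Hom (V := C) x y // F.map f = Multiplicative.ofAdd 1}

def DegreeOne.incl (F : C ⥤ BN) : DegreeOne F ⥤q C where
  obj x := x
  map e := e.down.1

variable {F : C ⥤ BN}

theorem map_lift_incl_map {x y : DegreeOne F} (p : Quiver.Path x y) :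
    F.map ((Paths.lift (DegreeOne.incl F)).map p) = Multiplicative.ofAdd p.length := by
  induction p with
  | nil => exact F.map_id _
  | cons p e ih =>
    refine (F.map_comp ((Paths.lift (DegreeOne.incl F)).map p) e.down.1).trans ?_
    rw [SingleObj.comp_as_mul, ih, Quiver.Path.length_cons, ofAdd_add, mul_comm]
    exact congrArg (· * Multiplicative.ofAdd p.length) e.down.2

theorem IsCULF.exists_lift_incl_map_eq (hF : IsCULF F) (n : ℕ) {x y : C} (f : x ⟶ y)
    (hf : F.map f = Multiplicative.ofAdd n) :
    ∃ p : Quiver.Path (V := DegreeOne F) x y, (Paths.lift (DegreeOne.incl F)).map p = f := by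
  induction n generalizing y with
  | zero =>
    obtain ⟨rfl, rfl⟩ := hF.eq_eqToHom_of_map_eq_id f hf
    exact ⟨.nil, rfl⟩
  | succ n ih =>
    obtain ⟨⟨z, f₁, f₂⟩, ⟨rfl, hf₁, hf₂⟩, -⟩ :=
      hF f (Multiplicative.ofAdd n) (Multiplicative.ofAdd 1) (by rw [hf, ofAdd_add])
    obtain ⟨p, rfl⟩ := ih f₁ hf₁
    exact ⟨p.cons ⟨f₂, hf₂⟩, rfl⟩

theorem length_eq_of_lift_incl_map_eq {x y : DegreeOne F} {p q : Quiver.Path x y}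
    (h : (Paths.lift (DegreeOne.incl F)).map p = (Paths.lift (DegreeOne.incl F)).map q) :
    p.length = q.length :=
  Multiplicative.ofAdd.injective (by rw [← map_lift_incl_map, ← map_lift_incl_map, h])

theorem IsCULF.eq_of_lift_incl_map_eq (hF : IsCULF F) {x : DegreeOne F} :
    ∀ {y : DegreeOne F} {p q : Quiver.Path x y},
      (Paths.lift (DegreeOne.incl F)).map p = (Paths.lift (DegreeOne.incl F)).map q → p = q
  | _, .nil, q, h => (q.eq_nil_of_length_zero (length_eq_of_lift_incl_map_eq h).symm).symm
  | _, .cons p e, .nil, h => absurd (length_eq_of_lift_incl_map_eq h) (Nat.succ_ne_zero _)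
  | _, .cons p e, .cons q e', h => by
    have hlen : p.length = q.length := Nat.succ.inj (length_eq_of_lift_incl_map_eq h)
    have hmap : F.map ((Paths.lift (DegreeOne.incl F)).map p) =
        F.map ((Paths.lift (DegreeOne.incl F)).map q) := by
      rw [map_lift_incl_map, map_lift_incl_map, hlen]
    obtain ⟨rfl, h'⟩ := Sigma.mk.inj_iff.mp (hF.sigma_eq h hmap (e.down.2.trans e'.down.2.symm))
    obtain ⟨hp, he⟩ := Prod.ext_iff.mp (eq_of_heq h')
    obtain rfl := hF.eq_of_lift_incl_map_eq hp
    obtain rfl : e = e' := ULift.ext _ _ (Subtype.ext he)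
    rfl

theorem IsCULF.isIso_lift_incl (hF : IsCULF F) : (Paths.lift (DegreeOne.incl F)).IsIso where
  faithful := ⟨fun h => hF.eq_of_lift_incl_map_eq h⟩
  full := ⟨fun f => hF.exists_lift_incl_map_eq _ f (ofAdd_toAdd _).symm⟩
  bijective_obj := Function.bijective_id

end DegreeOne

/-- Street. A category admits a CULF functor to `Bℕ` if and
only if it is free on a directed graph, i.e. isomorphic to the path category
of a quiver. -/
theorem culf_to_BN_iff_free {C : Type u} [SmallCategory C] :
    (∃ F : C ⥤ BN, IsCULF F) ↔
      ∃ (Q : Type u) (_ : Quiver.{u + 1} Q),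
        Nonempty (Cat.of (ULiftHom.{u + 1} C) ≅ Cat.of (Paths Q)) := by
  constructor
  · rintro ⟨F, hF⟩
    have := hF.isIso_lift_incl
    exact ⟨DegreeOne F, inferInstance,
      ⟨(Paths.lift (DegreeOne.incl F) ⋙ ULiftHom.up).asIsomorphism.symm.toCatIso⟩⟩
  · rintro ⟨Q, _, ⟨I⟩⟩
    let e : IsoCat C (Paths Q) :=
      (ULiftHom.up : C ⥤ ULiftHom.{u + 1} C).asIsomorphism.trans I.toIsoCat
    exact ⟨e.functor ⋙ lengthFunctor Q, IsCULF.comp_of_isIso e.functor (isCULF_lengthFunctor Q)⟩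

end FreeDecompPaper
end
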